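/- Let K be a field and f a multilinear polynomial such that f is not a polynomial identity of UT₂(K) but the sum of its coefficients is zero. Then the image of f on UT₂(K) equals J, the one-dimensional space of strictly upper triangular 2×2 matrices. -/

import Mathlib

/-!
On upper triangular matrices the diagonal is multiplicative, so every monomial
`x_{σ(1)} ⋯ x_{σ(n)}` takes the same diagonal value `∏ₖ diag aₖ` whatever `σ` is. Hence the
diagonal of `f(a)` is `(∑ α_σ) ∏ₖ diag aₖ = 0`, and the image of `f` on `UT₂(K)` lies in
`J = K E₁₂`. Conversely, `f` is multilinear, so its image is closed under scalars; since `J`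
is one-dimensional, any nonzero value of `f` spans all of it.
-/

open Matrix

/-- Upper triangular n×n matrices (as a set). -/
def UTset (n : ℕ) (K : Type*) [Ring K] : Set (Matrix (Fin n) (Fin n) K) :=
  {A | ∀ i j : Fin n, j < i → A i j = 0}

/-- The k-th power Jᵏ of the strictly upper triangular ideal:
matrices whose (i,j) entry vanishes unless j ≥ i + k. -/
def Jset (n : ℕ) (K : Type*) [Ring K] (k : ℕ) : Set (Matrix (Fin n) (Fin n) K) :=
  {A | ∀ i j : Fin n, (j : ℕ) < (i : ℕ) + k → A i j = 0}

/-- Evaluation of the multilinear polynomial ∑_σ α_σ x_{σ(1)}⋯x_{σ(n)}. -/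
def mlEval {K A : Type*} [CommSemiring K] [Ring A] [Algebra K A] {n : ℕ}
    (α : Equiv.Perm (Fin n) → K) (a : Fin n → A) : A :=
  ∑ σ : Equiv.Perm (Fin n), α σ • (List.ofFn fun i => a (σ i)).prod

/-- Image of a multilinear polynomial on a subset S of an algebra. -/
def mlImage {K A : Type*} [CommSemiring K] [Ring A] [Algebra K A] {n : ℕ}
    (α : Equiv.Perm (Fin n) → K) (S : Set A) : Set A :=
  {x | ∃ a : Fin n → A, (∀ i, a i ∈ S) ∧ x = mlEval α a}

namespace Matrix

variable {m R : Type*} [Fintype m] [LinearOrder m] [CommSemiring R]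

theorem IsUpperTriangular.diag_mul {M N : Matrix m m R} (hM : M.IsUpperTriangular)
    (hN : N.IsUpperTriangular) : (M * N).diag = M.diag * N.diag := by
  ext i
  rw [diag_apply, mul_apply, Finset.sum_eq_single i]
  · rfl
  · intro k _ hki
    rcases hki.lt_or_gt with hlt | hgt
    · rw [hM hlt, zero_mul]
    · rw [hN hgt, mul_zero]
  · simp

theorem isUpperTriangular_list_prod [DecidableEq m] {l : List (Matrix m m R)}
    (hl : ∀ M ∈ l, M.IsUpperTriangular) :
    l.prod.IsUpperTriangular ∧ l.prod.diag = (l.map diag).prod := by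
  induction l with
  | nil => exact ⟨blockTriangular_one, diag_one⟩
  | cons M l ih =>
    obtain ⟨hM, hl⟩ := List.forall_mem_cons.mp hl
    obtain ⟨hprod, hdiag⟩ := ih hl
    rw [List.prod_cons, List.map_cons, List.prod_cons, hM.diag_mul hprod, hdiag]
    exact ⟨hM.mul hprod, rfl⟩

theorem IsUpperTriangular.ofFn_prod_perm_apply [DecidableEq m] {n : ℕ}
    {a : Fin n → Matrix m m R} (ha : ∀ k, (a k).IsUpperTriangular) (σ : Equiv.Perm (Fin n))
    {i j : m} (hji : j ≤ i) :
    (List.ofFn fun k => a (σ k)).prod i j = (List.ofFn a).prod i j := by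
  have key : ∀ τ : Equiv.Perm (Fin n), (List.ofFn fun k => a (τ k)).prod.IsUpperTriangular ∧
      (List.ofFn fun k => a (τ k)).prod.diag = ∏ k, (a k).diag := by
    intro τ
    obtain ⟨hut, hdiag⟩ := isUpperTriangular_list_prod (l := List.ofFn fun k => a (τ k))
      (by simp [List.mem_ofFn, ha])
    refine ⟨hut, ?_⟩
    rw [hdiag, List.map_ofFn, List.prod_ofFn]
    exact Equiv.prod_comp τ fun k => (a k).diag
  obtain ⟨hσ, hσd⟩ := key σ
  obtain ⟨h1, h1d⟩ := key 1
  simp only [Equiv.Perm.coe_one, id_eq] at h1 h1d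
  rcases hji.lt_or_eq with hlt | rfl
  · rw [hσ hlt, h1 hlt]
  · simpa using congrFun (hσd.trans h1d.symm) j

end Matrix

section Multilinear

variable {K A : Type*} [CommSemiring K] [Ring A] [Algebra K A] {n : ℕ}

theorem mlEval_fin_zero (α : Equiv.Perm (Fin 0) → K) (a : Fin 0 → A) :
    mlEval α a = (∑ σ, α σ) • (1 : A) := by
  simp [mlEval]

def mlEvalMultilinear (α : Equiv.Perm (Fin n) → K) :
    MultilinearMap K (fun _ : Fin n => A) A :=
  ∑ σ, α σ • (MultilinearMap.mkPiAlgebraFin K n A).domDomCongr σ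

theorem mlEvalMultilinear_apply (α : Equiv.Perm (Fin n) → K) (a : Fin n → A) :
    mlEvalMultilinear α a = mlEval α a := by
  simp [mlEvalMultilinear, mlEval]

theorem mlEval_update_smul (α : Equiv.Perm (Fin n) → K) (a : Fin n → A) (i : Fin n) (c : K) :
    mlEval α (Function.update a i (c • a i)) = c • mlEval α a := by
  rw [← mlEvalMultilinear_apply, MultilinearMap.map_update_smul, Function.update_eq_self,
    mlEvalMultilinear_apply]

theorem smul_mlEval_mem_mlImage {α : Equiv.Perm (Fin n) → K} {S : Set A}
    (hS : ∀ (c : K), ∀ x ∈ S, c • x ∈ S) {a : Fin n → A} (ha : ∀ i, a i ∈ S) (i : Fin n)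
    (c : K) : c • mlEval α a ∈ mlImage α S := by
  refine ⟨Function.update a i (c • a i), fun k => ?_, (mlEval_update_smul α a i c).symm⟩
  rcases eq_or_ne k i with rfl | hk
  · simpa using hS c _ (ha k)
  · simpa [hk] using ha k

end Multilinear

theorem mlEval_mem_Jset_one {K : Type*} [CommRing K] {m n : ℕ} {α : Equiv.Perm (Fin n) → K}
    (hα : ∑ σ, α σ = 0) {a : Fin n → Matrix (Fin m) (Fin m) K} (ha : ∀ k, a k ∈ UTset m K) :
    mlEval α a ∈ Jset m K 1 := by
  intro i j hij
  have hut : ∀ k, (a k).IsUpperTriangular := fun k _ _ h => ha k _ _ h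
  have hji : j ≤ i := Fin.le_iff_val_le_val.mpr (Nat.lt_succ_iff.mp hij)
  simp only [mlEval, Matrix.sum_apply, Matrix.smul_apply, smul_eq_mul,
    IsUpperTriangular.ofFn_prod_perm_apply hut _ hji, ← Finset.sum_mul, hα, zero_mul]

theorem Jset_two_one_ext {K : Type*} [Ring K] {A B : Matrix (Fin 2) (Fin 2) K}
    (hA : A ∈ Jset 2 K 1) (hB : B ∈ Jset 2 K 1) (h : A 0 1 = B 0 1) : A = B := by
  ext i j
  fin_cases i <;> fin_cases j
  · exact (hA 0 0 (by decide)).trans (hB 0 0 (by decide)).symm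
  · exact h
  · exact (hA 1 0 (by decide)).trans (hB 1 0 (by decide)).symm
  · exact (hA 1 1 (by decide)).trans (hB 1 1 (by decide)).symm

theorem Jset_two_one_eq_smul {K : Type*} [Field K] {A B : Matrix (Fin 2) (Fin 2) K}
    (hA : A ∈ Jset 2 K 1) (hB : B ∈ Jset 2 K 1) (hB0 : B ≠ 0) : A = (A 0 1 / B 0 1) • B := by
  have hB01 : B 0 1 ≠ 0 := fun h => hB0 (Jset_two_one_ext hB (fun _ _ _ => rfl) h)
  refine Jset_two_one_ext hA (fun i j h => ?_) ?_
  · simp [hB i j h]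
  · simp [div_mul_cancel₀ _ hB01]

theorem stmt_6 {K : Type*} [Field K] {n : ℕ}
    (α : Equiv.Perm (Fin n) → K) (hα : ∑ σ : Equiv.Perm (Fin n), α σ = 0)
    (hni : ∃ a : Fin n → Matrix (Fin 2) (Fin 2) K,
      (∀ i, a i ∈ UTset 2 K) ∧ mlEval α a ≠ 0) :
    mlImage α (UTset 2 K) = Jset 2 K 1 := by
  refine subset_antisymm (fun _ ⟨a, ha, hx⟩ => hx ▸ mlEval_mem_Jset_one hα ha) fun x hx => ?_
  obtain ⟨a, ha, hne⟩ := hni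
  obtain ⟨i⟩ : Nonempty (Fin n) := by
    refine Fin.pos_iff_nonempty.mp (Nat.pos_of_ne_zero ?_)
    rintro rfl
    exact hne (by rw [mlEval_fin_zero, hα, zero_smul])
  rw [Jset_two_one_eq_smul hx (mlEval_mem_Jset_one hα ha) hne]
  exact smul_mlEval_mem_mlImage (fun c M hM p q h => by simp [hM p q h]) ha i _
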